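/- arXiv:2201.02376 — 4 statements merged into one kernel-verified Lean document; each statement's English description precedes it below -/
import Mathlib

section
/- For each positive integer n, the characteristic polynomial of the n×n unit-primitive matrix A_n satisfies f_{A_n}(x) = det(xI_n − A_n) = (−1)^{⌊(n+1)/2⌋} · x^n · f_{T_n}((−1)^{n+1}/x) as rational functions (equivalently as polynomials after clearing denominators), where T_n is the matrix with (T_n)_{ij} = [|i−j|=1] + [(i,j)=(1,1)]. -/
open Matrix

/-!
`A n` is invertible, with inverse `Ainv n` having entries `[i + j + 1 = n] - [i + j = n]`
(0-based), so `x • 1 - A n = A n * (x • Ainv n - 1)` and `det (A n) = (-1) ^ (n / 2)`.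
The signed graph of `Ainv n` is a path with a loop at one end. Relabelling its vertices along the
path and conjugating by a `±1` diagonal turns `Ainv n` into `(-1) ^ (n + 1) • Tmat n`, so
`det (x • Ainv n - 1) = det (((-1) ^ (n + 1) * x) • Tmat n - 1)`; pulling out the scalar
`-((-1) ^ (n + 1) * x)` leaves the characteristic polynomial of `Tmat n` at `(-1) ^ (n + 1) / x`.
-/

/-- The `n × n` unit-primitive matrix: entry `(i,j)` (1-based) is 1 iff `i + j ≤ n + 1`. -/
def A (n : ℕ) : Matrix (Fin n) (Fin n) ℝ :=
  Matrix.of fun i j => if (i : ℕ) + (j : ℕ) + 1 ≤ n then 1 else 0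

/-- The `n × n` matrix `T_n` with `(i,j)`-entry `[|i-j| = 1] + [(i,j) = (1,1)]`. -/
def Tmat (n : ℕ) : Matrix (Fin n) (Fin n) ℝ :=
  Matrix.of fun i j =>
    (if (i : ℕ) + 1 = j ∨ (j : ℕ) + 1 = i then 1 else 0) +
      (if (i : ℕ) = 0 ∧ (j : ℕ) = 0 then 1 else 0)

section

variable {ι R : Type*} [Fintype ι] [DecidableEq ι] [CommRing R]

theorem Matrix.det_smul_one_sub_of_mul_eq_one {M N : Matrix ι ι R} (h : M * N = 1) (x : R) :
    (x • (1 : Matrix ι ι R) - M).det = M.det * (x • N - 1).det := by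
  rw [← det_mul, Matrix.mul_sub, Matrix.mul_smul, h, Matrix.mul_one]

theorem Matrix.det_mul_mul_of_mul_self_eq_one {D : Matrix ι ι R} (hD : D * D = 1)
    (M : Matrix ι ι R) : (D * M * D).det = M.det := by
  rw [det_mul, det_mul, mul_right_comm, ← det_mul, hD, det_one, one_mul]

theorem Matrix.det_submatrix_self_of_injective {f : ι → ι} (hf : Function.Injective f)
    (M : Matrix ι ι R) : (M.submatrix f f).det = M.det :=
  det_submatrix_equiv_self (Equiv.ofBijective f (Finite.injective_iff_bijective.mp hf)) M

theorem Matrix.det_smul_sub_one {K : Type*} [Field K] (M : Matrix ι ι K) {c : K} (hc : c ≠ 0) :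
    (c • M - 1).det = (-c) ^ Fintype.card ι * (c⁻¹ • (1 : Matrix ι ι K) - M).det := by
  rw [← det_smul, smul_sub, smul_smul, neg_mul, mul_inv_cancel₀ hc, neg_smul, one_smul,
    neg_smul, sub_neg_eq_add, neg_add_eq_sub]

end

theorem neg_one_pow_div_two_mul_neg_one_pow {R : Type*} [Monoid R] [HasDistribNeg R] (n : ℕ) :
    (-1 : R) ^ (n / 2) * (-1) ^ n = (-1) ^ ((n + 1) / 2) := by
  rw [← pow_add, show n / 2 + n = (n + 1) / 2 + 2 * (n / 2) by omega, pow_add, pow_mul,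
    neg_one_sq, one_pow, mul_one]

theorem det_A_succ (n : ℕ) : (A (n + 1)).det = (-1) ^ n * (A n).det := by
  -- the last row of `A (n + 1)` is the first unit vector
  rw [det_succ_row _ (Fin.last n), Fin.sum_univ_succ, Finset.sum_eq_zero, add_zero]
  · have hminor : (A (n + 1)).submatrix (Fin.last n).succAbove (Fin.succAbove 0) = A n := by
      ext i j
      simp only [A, submatrix_apply, of_apply, Fin.succAbove_last, Fin.succAbove_zero,
        Fin.val_castSucc, Fin.val_succ]
      split_ifs <;> first | rfl | omega
    rw [hminor]
    simp [A]
  · intro i _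
    simp [A]

theorem det_A (n : ℕ) : (A n).det = (-1) ^ (n / 2) := by
  induction n with
  | zero => simp
  | succ n ih => rw [det_A_succ, ih, mul_comm, neg_one_pow_div_two_mul_neg_one_pow]

def Ainv (n : ℕ) : Matrix (Fin n) (Fin n) ℝ :=
  Matrix.of fun i j =>
    (if (i : ℕ) + (j : ℕ) + 1 = n then 1 else 0) - (if (i : ℕ) + (j : ℕ) = n then 1 else 0)

theorem A_mul_Ainv (n : ℕ) : A n * Ainv n = 1 := by
  ext i k
  have hk := k.isLt
  have hterm (j : Fin n) : A n i j * Ainv n j k =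
      (if (j : ℕ) = n - 1 - k then if (i : ℕ) ≤ k then 1 else 0 else 0) -
        (if (j : ℕ) = n - k then if (i : ℕ) < k then 1 else 0 else 0) := by
    simp only [A, Ainv, of_apply]
    split_ifs <;> first | omega | norm_num
  simp only [mul_apply, hterm, Finset.sum_sub_distrib]
  rw [Fin.sum_univ_eq_sum_range (fun j => if j = n - 1 - k then _ else 0),
    Fin.sum_univ_eq_sum_range (fun j => if j = n - k then _ else 0),
    Finset.sum_ite_eq', Finset.sum_ite_eq', one_apply]
  simp only [Finset.mem_range, Fin.ext_iff]
  split_ifs <;> first | omega | norm_num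

/-- The position of vertex `i` along the path traced by the graph of `Ainv n`, counted from the
vertex carrying the loop. -/
def pathPosition (n : ℕ) (i : Fin n) : Fin n :=
  ⟨if 2 * (i : ℕ) < n then n - 1 - 2 * i else 2 * i - n, by split_ifs <;> omega⟩

theorem pathPosition_spec {n : ℕ} (i : Fin n) :
    2 * (i : ℕ) + pathPosition n i + 1 = n ∨ 2 * (i : ℕ) = pathPosition n i + n := by
  simp only [pathPosition]
  split_ifs <;> omega

theorem pathPosition_injective (n : ℕ) : Function.Injective (pathPosition n) := by
  intro i j h
  simp only [pathPosition, Fin.ext_iff] at h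
  ext
  split_ifs at h <;> omega

noncomputable def signDiag (n : ℕ) : Matrix (Fin n) (Fin n) ℝ :=
  diagonal fun k => (-1) ^ (((k : ℕ) + 1) / 2)

theorem signDiag_mul_self (n : ℕ) : signDiag n * signDiag n = 1 := by
  simp [signDiag, ← pow_add, ← two_mul, pow_mul]

theorem Ainv_eq_submatrix (n : ℕ) :
    Ainv n = (-1) ^ (n + 1) •
      (signDiag n * Tmat n * signDiag n).submatrix (pathPosition n) (pathPosition n) := by
  ext i j
  have hi := pathPosition_spec i
  have hj := pathPosition_spec j
  simp only [Ainv, Tmat, signDiag, of_apply, diagonal_mul, mul_diagonal, submatrix_apply,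
    Matrix.smul_apply, neg_one_pow_eq_ite, Nat.even_iff]
  generalize ((pathPosition n i : Fin n) : ℕ) = p at hi ⊢
  generalize ((pathPosition n j : Fin n) : ℕ) = q at hj ⊢
  split_ifs <;> first | omega | norm_num

theorem smul_Ainv_sub_one (n : ℕ) (x : ℝ) :
    x • Ainv n - 1 = (signDiag n * (((-1) ^ (n + 1) * x) • Tmat n - 1) * signDiag n).submatrix
      (pathPosition n) (pathPosition n) := by
  rw [Matrix.mul_sub, Matrix.sub_mul, Matrix.mul_one, signDiag_mul_self, Matrix.mul_smul,
    Matrix.smul_mul, Ainv_eq_submatrix]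
  ext i j
  simp only [Matrix.sub_apply, Matrix.smul_apply, submatrix_apply, one_apply,
    (pathPosition_injective n).eq_iff, smul_eq_mul]
  ring

theorem fA_eq_fT_general (n : ℕ) (x : ℝ) (hx : x ≠ 0) :
    (x • (1 : Matrix (Fin n) (Fin n) ℝ) - A n).det =
      (-1 : ℝ) ^ ((n + 1) / 2) * x ^ n *
        (((-1 : ℝ) ^ (n + 1) / x) • (1 : Matrix (Fin n) (Fin n) ℝ) - Tmat n).det := by
  have hc : (-1 : ℝ) ^ (n + 1) * x ≠ 0 := mul_ne_zero (pow_ne_zero _ (by norm_num)) hx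
  have hinv : ((-1 : ℝ) ^ (n + 1) * x)⁻¹ = (-1) ^ (n + 1) / x := by
    rw [mul_inv, ← inv_pow, inv_neg_one, div_eq_mul_inv]
  have hpow : (-((-1 : ℝ) ^ (n + 1) * x)) ^ n = (-1) ^ n * x ^ n := by
    rw [show -((-1 : ℝ) ^ (n + 1) * x) = (-1) ^ n * x by ring, mul_pow]
    rcases neg_one_pow_eq_or ℝ n with h | h <;> simp [h]
  rw [det_smul_one_sub_of_mul_eq_one (A_mul_Ainv n), smul_Ainv_sub_one,
    det_submatrix_self_of_injective (pathPosition_injective n),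
    det_mul_mul_of_mul_self_eq_one (signDiag_mul_self n), det_smul_sub_one _ hc,
    Fintype.card_fin, hinv, hpow, det_A, ← neg_one_pow_div_two_mul_neg_one_pow]
  ring

/-- For each positive integer `n` and `x ≠ 0`:
`f_{A_n}(x) = (−1)^{⌊(n+1)/2⌋} x^n f_{T_n}((−1)^{n+1}/x)`. -/
theorem fA_eq_fT (n : ℕ) (hn : 0 < n) (x : ℝ) (hx : x ≠ 0) :
    (x • (1 : Matrix (Fin n) (Fin n) ℝ) - A n).det =
      (-1 : ℝ) ^ ((n + 1) / 2) * x ^ n *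
        (((-1 : ℝ) ^ (n + 1) / x) • (1 : Matrix (Fin n) (Fin n) ℝ) - Tmat n).det :=
  fA_eq_fT_general n x hx
end

section
/- For each positive integer n, det(xI_n − A_n) = Σ_{k=0}^{n} (−1)^{⌊3k/2⌋} · C(⌊(n+k)/2⌋, k) · x^{n−k}, where A_n is the n×n unit-primitive matrix with entries a_{ij} = [i+j ≤ n+1]. -/
/-!
Let `D n = det (x • 1 - A n)`; with 0-based indices, `A n` has a `1` at `(i, j)` iff `i + j < n`.
Laplace expansion along the last row gives `D (n + 2) = x * E (n + 1) - D n`, where `E m` is the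
determinant of `x • 1 - [i + j < m + 1]` of size `m`. In that matrix the first two rows agree off
the first two columns and vice versa, so subtracting row 1 from row 0 and column 1 from column 0
leaves only two nonzero entries in column 0, and `E (n + 3) = 2x D (n + 2) - x³ D n`. Hence
`D (n + 4) = (2x² - 1) D (n + 2) - x⁴ D n`. Pascal's rule shows that the explicit sum satisfies the
same recurrence, and the two agree for `n ≤ 3`.
-/

open Matrix

namespace Matrix

variable {R : Type*} [CommRing R] {n : ℕ}

theorem det_succ_row_eq_single (M : Matrix (Fin (n + 1)) (Fin (n + 1)) R) (i j : Fin (n + 1))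
    (h : ∀ k, k ≠ j → M i k = 0) :
    M.det = (-1) ^ (i + j : ℕ) * M i j * (M.submatrix i.succAbove j.succAbove).det := by
  rw [det_succ_row M i, Fintype.sum_eq_single j fun k hk => by rw [h k hk, mul_zero, zero_mul]]

theorem det_succ_column_eq_single (M : Matrix (Fin (n + 1)) (Fin (n + 1)) R) (i j : Fin (n + 1))
    (h : ∀ k, k ≠ i → M k j = 0) :
    M.det = (-1) ^ (i + j : ℕ) * M i j * (M.submatrix i.succAbove j.succAbove).det := by
  rw [det_succ_column M j, Fintype.sum_eq_single i fun k hk => by rw [h k hk, mul_zero, zero_mul]]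

theorem det_succ_row_eq_add (M : Matrix (Fin (n + 1)) (Fin (n + 1)) R) (i : Fin (n + 1))
    {j₁ j₂ : Fin (n + 1)} (hj : j₁ ≠ j₂) (h : ∀ k, k ≠ j₁ ∧ k ≠ j₂ → M i k = 0) :
    M.det = (-1) ^ (i + j₁ : ℕ) * M i j₁ * (M.submatrix i.succAbove j₁.succAbove).det +
      (-1) ^ (i + j₂ : ℕ) * M i j₂ * (M.submatrix i.succAbove j₂.succAbove).det := by
  rw [det_succ_row M i,
    Fintype.sum_eq_add j₁ j₂ hj fun k hk => by rw [h k hk, mul_zero, zero_mul]]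

theorem det_succ_column_eq_add (M : Matrix (Fin (n + 1)) (Fin (n + 1)) R) (j : Fin (n + 1))
    {i₁ i₂ : Fin (n + 1)} (hi : i₁ ≠ i₂) (h : ∀ k, k ≠ i₁ ∧ k ≠ i₂ → M k j = 0) :
    M.det = (-1) ^ (i₁ + j : ℕ) * M i₁ j * (M.submatrix i₁.succAbove j.succAbove).det +
      (-1) ^ (i₂ + j : ℕ) * M i₂ j * (M.submatrix i₂.succAbove j.succAbove).det := by
  rw [det_succ_column M j,
    Fintype.sum_eq_add i₁ i₂ hi fun k hk => by rw [h k hk, mul_zero, zero_mul]]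

/-- Subtract row `1` from row `0` and column `1` from column `0`, then expand along column `0`. -/
theorem det_eq_of_rows_zero_one_agree_of_cols_zero_one_agree
    (M : Matrix (Fin (n + 2)) (Fin (n + 2)) R)
    (hrow : ∀ j : Fin n, M 0 j.succ.succ = M 1 j.succ.succ)
    (hcol : ∀ i : Fin n, M i.succ.succ 0 = M i.succ.succ 1) :
    M.det = (M 0 0 - M 0 1 - M 1 0 + M 1 1) * (M.submatrix Fin.succ Fin.succ).det -
      (M 0 1 - M 1 1) * (M 1 0 - M 1 1) *
        (M.submatrix (Fin.succ ∘ Fin.succ) (Fin.succ ∘ Fin.succ)).det := by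
  set M' := transvection 0 1 (-1) * M * transvection 1 0 (-1) with hM'
  have hdet : M.det = M'.det := by simp [M', det_mul]
  have h_of_ne {i j : Fin (n + 2)} (hi : i ≠ 0) (hj : j ≠ 0) : M' i j = M i j := by
    rw [hM', mul_transvection_apply_of_ne (hb := hj), transvection_mul_apply_of_ne (ha := hi)]
  have h_row {j : Fin (n + 2)} (hj : j ≠ 0) : M' 0 j = M 0 j - M 1 j := by
    rw [hM', mul_transvection_apply_of_ne (hb := hj), transvection_mul_apply_same]
    ring
  have h_col {i : Fin (n + 2)} (hi : i ≠ 0) : M' i 0 = M i 0 - M i 1 := by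
    rw [hM', mul_transvection_apply_same, transvection_mul_apply_of_ne (ha := hi),
      transvection_mul_apply_of_ne (ha := hi)]
    ring
  have h_corner : M' 0 0 = M 0 0 - M 0 1 - M 1 0 + M 1 1 := by
    rw [hM', mul_transvection_apply_same, transvection_mul_apply_same,
      transvection_mul_apply_same]
    ring
  have h_minor₀ : M'.submatrix Fin.succ Fin.succ = M.submatrix Fin.succ Fin.succ := by
    ext i j
    exact h_of_ne (Fin.succ_ne_zero _) (Fin.succ_ne_zero _)
  have h_minor₁ : (M'.submatrix (Fin.succAbove 1) Fin.succ).det =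
      (M 0 1 - M 1 1) * (M.submatrix (Fin.succ ∘ Fin.succ) (Fin.succ ∘ Fin.succ)).det := by
    rw [det_succ_row_eq_single _ 0 0, submatrix_submatrix, submatrix_apply,
      Fin.one_succAbove_zero, h_row (Fin.succ_ne_zero _)]
    · have : M'.submatrix (Fin.succAbove 1 ∘ Fin.succ) (Fin.succ ∘ Fin.succ) =
          M.submatrix (Fin.succ ∘ Fin.succ) (Fin.succ ∘ Fin.succ) := by
        ext i j
        simpa using h_of_ne (Fin.succ_ne_zero i.succ) (Fin.succ_ne_zero j.succ)
      rw [Fin.succAbove_zero, this]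
      simp
    · intro k hk
      obtain ⟨k, rfl⟩ := Fin.exists_succ_eq.mpr hk
      rw [submatrix_apply, Fin.one_succAbove_zero, h_row (Fin.succ_ne_zero _), hrow, sub_self]
  rw [hdet, det_succ_column_eq_add M' 0 (zero_ne_one' _), h_corner, h_col one_ne_zero,
    Fin.succAbove_zero, h_minor₁, h_minor₀]
  · simp only [Fin.val_zero, Fin.val_one, add_zero, pow_zero, pow_one]
    ring
  · rintro k ⟨hk₀, hk₁⟩
    obtain ⟨k, rfl⟩ := Fin.exists_succ_eq.mpr hk₀
    obtain ⟨k, rfl⟩ := Fin.exists_succ_eq.mpr (show k ≠ 0 by rintro rfl; exact hk₁ rfl)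
    rw [h_col (Fin.succ_ne_zero _), hcol, sub_self]

end Matrix

variable {R : Type*} [CommRing R]

variable (R) in
/-- With 0-based indices, `A n = stair ℝ n n`. -/
def stair (m t : ℕ) : Matrix (Fin m) (Fin m) R :=
  of fun i j => if (i : ℕ) + j < t then 1 else 0

section Entries

variable {x : R} {m t : ℕ} {i j : Fin m}

theorem sub_stair_apply :
    (x • 1 - stair R m t) i j =
      (if (i : ℕ) = j then x else 0) - if (i : ℕ) + j < t then 1 else 0 := by
  simp [stair, one_apply, Fin.ext_iff]

theorem sub_stair_apply_of_ne_of_le (hij : (i : ℕ) ≠ j) (ht : t ≤ i + j) :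
    (x • 1 - stair R m t) i j = 0 := by
  rw [sub_stair_apply, if_neg hij, if_neg ht.not_gt, sub_zero]

theorem sub_stair_apply_of_ne_of_lt (hij : (i : ℕ) ≠ j) (ht : i + j < t) :
    (x • 1 - stair R m t) i j = -1 := by
  rw [sub_stair_apply, if_neg hij, if_pos ht, zero_sub]

theorem sub_stair_apply_self_of_lt (ht : i + i < t) : (x • 1 - stair R m t) i i = x - 1 := by
  rw [sub_stair_apply, if_pos rfl, if_pos ht]

theorem sub_stair_apply_self_of_le (ht : t ≤ i + i) : (x • 1 - stair R m t) i i = x := by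
  rw [sub_stair_apply, if_pos rfl, if_neg ht.not_gt, sub_zero]

end Entries

variable (x : R)

theorem det_submatrix_sub_stair {k m : ℕ} (t a : ℕ) {f g : Fin k → Fin m}
    (hf : ∀ i, (f i : ℕ) = i + a) (hg : ∀ j, (g j : ℕ) = j + a) :
    ((x • 1 - stair R m t).submatrix f g).det = (x • 1 - stair R k (t - 2 * a)).det := by
  congr 1
  ext i j
  simp only [submatrix_apply, sub_stair_apply, hf, hg]
  congr 1
  · simp
  · congr 1
    apply propext
    omega

theorem det_sub_stair_succ_of_le {m t : ℕ} (ht : t ≤ m) :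
    (x • 1 - stair R (m + 1) t).det = x * (x • 1 - stair R m t).det := by
  rw [det_succ_row_eq_single _ (Fin.last m) (Fin.last m),
    sub_stair_apply_self_of_le (by simp; omega), det_submatrix_sub_stair x t 0 (by simp) (by simp)]
  · simp [← two_mul, pow_mul]
  · intro k hk
    have : (k : ℕ) < m := Fin.val_lt_last hk
    exact sub_stair_apply_of_ne_of_le (by simp; omega) (by simp; omega)

theorem det_sub_stair_add_two (n : ℕ) :
    (x • 1 - stair R (n + 2) (n + 2)).det =
      x * (x • 1 - stair R (n + 1) (n + 2)).det - (x • 1 - stair R n n).det := by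
  have h_corner : ((x • 1 - stair R (n + 2) (n + 2)).submatrix (Fin.last (n + 1)).succAbove
      Fin.succ).det = (-1) ^ n * -(x • 1 - stair R n n).det := by
    rw [det_succ_column_eq_single _ 0 (Fin.last n), submatrix_submatrix,
      det_submatrix_sub_stair x _ 1 (by simp) (by simp), submatrix_apply,
      sub_stair_apply_of_ne_of_lt (by simp) (by simp)]
    · simp
    · intro k hk
      have := Fin.val_ne_zero_iff.mpr hk
      exact sub_stair_apply_of_ne_of_le (by simp; omega) (by simp; omega)
  rw [det_succ_row_eq_add _ (Fin.last (n + 1)) Fin.last_pos.ne', Fin.succAbove_zero, h_corner,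
    det_submatrix_sub_stair x _ 0 (by simp) (by simp), sub_stair_apply_self_of_le (by simp; omega),
    sub_stair_apply_of_ne_of_lt (by simp) (by simp)]
  · have h_even : (-1 : R) ^ (n + 1 + (n + 1)) = 1 := Even.neg_one_pow ⟨n + 1, rfl⟩
    have h_odd : (-1 : R) ^ (n + 1) * (-1) ^ n = -1 := by
      rw [← pow_add, Odd.neg_one_pow ⟨n, by ring⟩]
    simp only [Fin.val_last, Fin.val_zero, add_zero, mul_zero, tsub_zero, h_even, one_mul]
    linear_combination (x • 1 - stair R n n).det * h_odd
  · rintro k ⟨hk_last, hk_zero⟩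
    have h₁ := Fin.val_ne_iff.mpr hk_last
    have h₂ := Fin.val_ne_zero_iff.mpr hk_zero
    rw [Fin.val_last] at h₁
    exact sub_stair_apply_of_ne_of_le (by simp; omega) (by simp; omega)

theorem det_sub_stair_add_three (n : ℕ) :
    (x • 1 - stair R (n + 3) (n + 4)).det =
      2 * x * (x • 1 - stair R (n + 2) (n + 2)).det -
        x ^ 2 * (x • 1 - stair R (n + 1) n).det := by
  rw [det_eq_of_rows_zero_one_agree_of_cols_zero_one_agree,
    det_submatrix_sub_stair x _ 1 (by simp) (by simp),
    det_submatrix_sub_stair x _ 2 (by simp) (by simp)]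
  · rw [sub_stair_apply_self_of_lt (by simp), sub_stair_apply_self_of_lt (by simp),
      sub_stair_apply_of_ne_of_lt (by simp) (by simp),
      sub_stair_apply_of_ne_of_lt (by simp) (by simp)]
    simp only [Nat.reduceMul, Nat.reduceSubDiff]
    ring
  · intro j
    rw [sub_stair_apply_of_ne_of_lt (by simp) (by simp; omega),
      sub_stair_apply_of_ne_of_lt (by simp) (by simp; omega)]
  · intro i
    rw [sub_stair_apply_of_ne_of_lt (by simp) (by simp; omega),
      sub_stair_apply_of_ne_of_lt (by simp) (by simp; omega)]

theorem det_sub_stair_add_four (n : ℕ) :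
    (x • 1 - stair R (n + 4) (n + 4)).det =
      (2 * x ^ 2 - 1) * (x • 1 - stair R (n + 2) (n + 2)).det -
        x ^ 4 * (x • 1 - stair R n n).det := by
  rw [det_sub_stair_add_two x (n + 2), det_sub_stair_add_three,
    det_sub_stair_succ_of_le x le_rfl]
  ring

variable (R) in
def stairCoeff (n k : ℕ) : R :=
  (-1) ^ (3 * k / 2) * ((n + k) / 2).choose k

def stairSum (n : ℕ) : R :=
  ∑ k ∈ Finset.range (n + 1), stairCoeff R n k * x ^ (n - k)

theorem stairCoeff_eq_zero {n k : ℕ} (h : n < k) : stairCoeff R n k = 0 := by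
  rw [stairCoeff, Nat.choose_eq_zero_of_lt (by omega), Nat.cast_zero, mul_zero]

theorem stairCoeff_zero (n : ℕ) : stairCoeff R n 0 = 1 := by
  simp [stairCoeff]

theorem stairCoeff_one (n : ℕ) : stairCoeff R n 1 = -(((n + 1) / 2 : ℕ) : R) := by
  simp [stairCoeff]

theorem stairCoeff_add_four_add_two (n k : ℕ) :
    stairCoeff R (n + 4) (k + 2) =
      2 * stairCoeff R (n + 2) (k + 2) - stairCoeff R (n + 2) k - stairCoeff R n (k + 2) := by
  set q := (n + k) / 2
  have pascal : (q + 3).choose (k + 2) + (q + 1).choose (k + 2) =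
      2 * (q + 2).choose (k + 2) + (q + 1).choose k := by
    have h₁ : (q + 3).choose (k + 2) = (q + 2).choose (k + 1) + (q + 2).choose (k + 2) :=
      Nat.choose_succ_succ' _ _
    have h₂ : (q + 2).choose (k + 1) = (q + 1).choose k + (q + 1).choose (k + 1) :=
      Nat.choose_succ_succ' _ _
    have h₃ : (q + 2).choose (k + 2) = (q + 1).choose (k + 1) + (q + 1).choose (k + 2) :=
      Nat.choose_succ_succ' _ _
    omega
  simp only [stairCoeff, show (n + 4 + (k + 2)) / 2 = q + 3 by omega,
    show (n + 2 + (k + 2)) / 2 = q + 2 by omega, show (n + 2 + k) / 2 = q + 1 by omega,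
    show (n + (k + 2)) / 2 = q + 1 by omega, show 3 * (k + 2) / 2 = 3 * k / 2 + 3 by omega,
    pow_add]
  have := congrArg (Nat.cast (R := R)) pascal
  push_cast at this
  linear_combination (-(-1 : R) ^ (3 * k / 2)) * this

open Finset in
theorem pow_mul_stairSum (a n : ℕ) :
    x ^ a * stairSum x n = ∑ k ∈ range (n + a + 1), stairCoeff R n k * x ^ (n + a - k) := by
  rw [stairSum, mul_sum, ← sum_subset (range_subset_range.2 (by omega : n + 1 ≤ n + a + 1))]
  · refine sum_congr rfl fun k hk => ?_
    rw [mem_range] at hk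
    rw [show n + a - k = n - k + a by omega, pow_add]
    ring
  · intro k _ hk
    rw [mem_range] at hk
    rw [stairCoeff_eq_zero (by omega), zero_mul]

open Finset in
theorem stairSum_add_four (n : ℕ) :
    stairSum x (n + 4) = (2 * x ^ 2 - 1) * stairSum x (n + 2) - x ^ 4 * stairSum x n := by
  have h₂ := pow_mul_stairSum x 2 (n + 2)
  have h₄ := pow_mul_stairSum x 4 n
  have hsum : ∑ k ∈ range (n + 3), stairCoeff R (n + 4) (k + 1 + 1) * x ^ (n + 2 - k) =
      2 * ∑ k ∈ range (n + 3), stairCoeff R (n + 2) (k + 1 + 1) * x ^ (n + 2 - k) -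
        ∑ k ∈ range (n + 3), stairCoeff R (n + 2) k * x ^ (n + 2 - k) -
        ∑ k ∈ range (n + 3), stairCoeff R n (k + 1 + 1) * x ^ (n + 2 - k) := by
    simp only [stairCoeff_add_four_add_two, mul_sum, ← sum_sub_distrib]
    exact sum_congr rfl fun k _ => by ring
  have hexp (k : ℕ) : n + 4 - (k + 1 + 1) = n + 2 - k := by omega
  rw [show (2 * x ^ 2 - 1) * stairSum x (n + 2) - x ^ 4 * stairSum x n =
    2 * (x ^ 2 * stairSum x (n + 2)) - stairSum x (n + 2) - x ^ 4 * stairSum x n by ring, h₂, h₄]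
  simp only [stairSum, sum_range_succ' _ (n + 3 + 1), sum_range_succ' _ (n + 3),
    show n + 2 + 2 = n + 4 from rfl, hexp, zero_add]
  rw [hsum, stairCoeff_one, stairCoeff_one, stairCoeff_one, stairCoeff_zero, stairCoeff_zero,
    stairCoeff_zero, show (n + 4 + 1) / 2 = (n + 1) / 2 + 2 by omega,
    show (n + 2 + 1) / 2 = (n + 1) / 2 + 1 by omega]
  push_cast
  ring

theorem det_sub_stair_self : ∀ n : ℕ, (x • 1 - stair R n n).det = stairSum x n
  | 0 => by simp [stairSum, stairCoeff]
  | 1 => by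
    rw [det_fin_one, sub_stair_apply]
    simp [stairSum, stairCoeff, Finset.sum_range_succ]
    ring
  | 2 => by
    rw [det_fin_two]
    simp only [sub_stair_apply]
    simp [stairSum, stairCoeff, Finset.sum_range_succ]
    ring
  | 3 => by
    rw [det_fin_three]
    simp only [sub_stair_apply]
    simp [stairSum, stairCoeff, Finset.sum_range_succ]
    ring
  | n + 4 => by
    rw [det_sub_stair_add_four, stairSum_add_four, det_sub_stair_self n,
      det_sub_stair_self (n + 2)]

theorem det_A_explicit_general (n : ℕ) (x : ℝ) :
    (x • (1 : Matrix (Fin n) (Fin n) ℝ) - A n).det =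
      ∑ k ∈ Finset.range (n + 1),
        (-1 : ℝ) ^ (3 * k / 2) * (Nat.choose ((n + k) / 2) k : ℝ) * x ^ (n - k) :=
  det_sub_stair_self x n

/-- For each positive integer `n` and all real `x`:
`det(x·I_n − A_n) = ∑_{k=0}^{n} (−1)^{⌊3k/2⌋} C(⌊(n+k)/2⌋,k) x^{n−k}`. -/
theorem det_A_explicit (n : ℕ) (hn : 0 < n) (x : ℝ) :
    (x • (1 : Matrix (Fin n) (Fin n) ℝ) - A n).det =
      ∑ k ∈ Finset.range (n + 1),
        (-1 : ℝ) ^ (3 * k / 2) * (Nat.choose ((n + k) / 2) k : ℝ) * x ^ (n - k) :=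
  det_A_explicit_general n x
end

section
/- For each positive integer n, define P_n(x) = Σ_{k=0}^{n} (−1)^{⌊3k/2⌋} C(⌊(n+k)/2⌋, k) x^k. Then P_n(x) = det(I_n − x·A_n), where A_n is the n×n unit-primitive matrix. -/
open Matrix

/-- `P_n(x) = ∑_{k=0}^{n} (−1)^{⌊3k/2⌋} C(⌊(n+k)/2⌋,k) x^k`. -/
def P (n : ℕ) (x : ℝ) : ℝ :=
  ∑ k ∈ Finset.range (n + 1),
    (-1 : ℝ) ^ (3 * k / 2) * (Nat.choose ((n + k) / 2) k : ℝ) * x ^ k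

/-- Reduced matrix `I − N − x·J` (N superdiagonal, J antidiagonal). -/
def B (n : ℕ) (x : ℝ) : Matrix (Fin n) (Fin n) ℝ :=
  Matrix.of fun i j =>
    (if (i : ℕ) = (j : ℕ) then 1 else 0) - (if (j : ℕ) = (i : ℕ) + 1 then 1 else 0)
      - x * (if (i : ℕ) + (j : ℕ) + 1 = n then 1 else 0)

/-- Unipotent row-operation matrix `I − N`. -/
def U (n : ℕ) : Matrix (Fin n) (Fin n) ℝ :=
  Matrix.of fun i j =>
    (if (i : ℕ) = (j : ℕ) then 1 else 0) - (if (j : ℕ) = (i : ℕ) + 1 then 1 else 0)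

lemma detU (n : ℕ) : (U n).det = 1 := by
  have h : (U n).det = ∏ i : Fin n, U n i i := by
    apply Matrix.det_of_upperTriangular
    intro i j hij
    have hj : (j : ℕ) < (i : ℕ) := hij
    have h1 : ¬((i : ℕ) = (j : ℕ)) := by omega
    have h2 : ¬((j : ℕ) = (i : ℕ) + 1) := by omega
    simp [U, h1, h2]
  rw [h]
  simp [U]

lemma UmulM (n : ℕ) (x : ℝ) :
    U n * ((1 : Matrix (Fin n) (Fin n) ℝ) - x • A n) = B n x := by
  ext i j
  rw [Matrix.mul_apply]
  have hterm : ∀ k : Fin n, U n i k * ((1 : Matrix (Fin n) (Fin n) ℝ) - x • A n) k j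
      = (if i = k then ((1 : Matrix (Fin n) (Fin n) ℝ) - x • A n) k j else 0)
        - (if (k : ℕ) = (i : ℕ) + 1 then ((1 : Matrix (Fin n) (Fin n) ℝ) - x • A n) k j else 0) := by
    intro k
    simp only [U, Matrix.of_apply, Fin.ext_iff]
    split_ifs <;> ring
  rw [Finset.sum_congr rfl fun k _ => hterm k, Finset.sum_sub_distrib,
    Finset.sum_ite_eq Finset.univ i _]
  simp only [Finset.mem_univ, if_true]
  by_cases hlt : (i : ℕ) + 1 < n
  · rw [Finset.sum_eq_single (⟨(i : ℕ) + 1, hlt⟩ : Fin n)]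
    · simp only [Matrix.sub_apply, Matrix.one_apply, Matrix.smul_apply, A, Matrix.of_apply,
        B, smul_eq_mul, Fin.ext_iff]
      split_ifs <;> first | ring1 | (exfalso; first | assumption | omega)
    · intro k _ hk
      have : (k : ℕ) ≠ (i : ℕ) + 1 := fun h => hk (Fin.ext (by simpa using h))
      simp [this]
    · intro h; exact absurd (Finset.mem_univ _) h
  · have hz : ∀ k : Fin n, (if (k : ℕ) = (i : ℕ) + 1
        then ((1 : Matrix (Fin n) (Fin n) ℝ) - x • A n) k j else 0) = 0 := by
      intro k
      have : (k : ℕ) ≠ (i : ℕ) + 1 := by have := k.isLt; omega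
      simp [this]
    rw [Finset.sum_eq_zero fun k _ => hz k]
    simp only [Matrix.sub_apply, Matrix.one_apply, Matrix.smul_apply, A, Matrix.of_apply,
      B, smul_eq_mul, Fin.ext_iff]
    split_ifs <;> first | ring1 | (exfalso; first | assumption | omega)

lemma detB_eq (n : ℕ) (x : ℝ) :
    ((1 : Matrix (Fin n) (Fin n) ℝ) - x • A n).det = (B n x).det := by
  rw [← UmulM n x, Matrix.det_mul, detU, one_mul]

lemma sub0det (n : ℕ) (x : ℝ) :
    ((B (n + 2) x).submatrix Fin.succ Fin.succ).det = (B n x).det := by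
  rw [Matrix.det_succ_row _ (Fin.last n)]
  rw [Finset.sum_eq_single (Fin.last n)]
  · have hentry : (B (n + 2) x).submatrix Fin.succ Fin.succ (Fin.last n) (Fin.last n) = 1 := by
      simp only [Matrix.submatrix_apply, B, Matrix.of_apply, Fin.val_succ, Fin.val_last]
      split_ifs <;> first | ring1 | (exfalso; first | assumption | omega)
    have hsub : ((B (n + 2) x).submatrix Fin.succ Fin.succ).submatrix
        (Fin.last n).succAbove (Fin.last n).succAbove = B n x := by
      rw [Fin.succAbove_last]
      ext i j
      simp only [Matrix.submatrix_apply, B, Matrix.of_apply, Fin.val_succ, Fin.coe_castSucc]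
      split_ifs <;> first | ring1 | (exfalso; first | assumption | omega)
    rw [hentry, hsub, Fin.val_last]
    rw [show (-1 : ℝ) ^ (n + n) = 1 from Even.neg_one_pow ⟨n, rfl⟩]
    ring
  · intro j _ hj
    have hjv : (j : ℕ) ≠ n := fun h => hj (Fin.ext (by simpa using h))
    have hentry : (B (n + 2) x).submatrix Fin.succ Fin.succ (Fin.last n) j = 0 := by
      simp only [Matrix.submatrix_apply, B, Matrix.of_apply, Fin.val_succ, Fin.val_last]
      have := j.isLt
      split_ifs <;> first | ring1 | (exfalso; first | assumption | omega)
    rw [hentry]; ring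
  · intro h; exact absurd (Finset.mem_univ _) h

lemma sub1 (n : ℕ) (x : ℝ) :
    (B (n + 2) x).submatrix Fin.castSucc Fin.succ = (-1 : ℝ) • (B (n + 1) (-x))ᵀ := by
  ext i j
  simp only [Matrix.submatrix_apply, Matrix.smul_apply, Matrix.transpose_apply, B,
    Matrix.of_apply, Fin.val_succ, Fin.coe_castSucc, smul_eq_mul]
  split_ifs <;> first | ring1 | (exfalso; first | assumption | omega)

lemma Bdet_rec (n : ℕ) (x : ℝ) :
    (B (n + 2) x).det = (B n x).det - x * (B (n + 1) (-x)).det := by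
  rw [Matrix.det_succ_column_zero]
  have hne : (0 : Fin (n + 2)) ≠ Fin.last (n + 1) := by
    simp [Fin.ext_iff]
  have hsub : ∑ i : Fin (n + 2), (-1 : ℝ) ^ (i : ℕ) * B (n + 2) x i 0 *
      ((B (n + 2) x).submatrix i.succAbove Fin.succ).det
      = ∑ i ∈ ({0, Fin.last (n + 1)} : Finset (Fin (n + 2))), (-1 : ℝ) ^ (i : ℕ) *
        B (n + 2) x i 0 * ((B (n + 2) x).submatrix i.succAbove Fin.succ).det := by
    refine (Finset.sum_subset (Finset.subset_univ _) ?_).symm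
    intro i _ hi
    simp only [Finset.mem_insert, Finset.mem_singleton] at hi
    push_neg at hi
    have h1 : (i : ℕ) ≠ 0 := fun h => hi.1 (Fin.ext (by simpa using h))
    have h2 : (i : ℕ) ≠ n + 1 := fun h => hi.2 (Fin.ext (by simpa using h))
    have hentry : B (n + 2) x i 0 = 0 := by
      have hz : ((0 : Fin (n + 2)) : ℕ) = 0 := rfl
      simp only [B, Matrix.of_apply, hz]
      split_ifs <;> first | ring1 | (exfalso; first | assumption | omega)
    rw [hentry]; ring
  rw [hsub, Finset.sum_pair hne]
  have h00 : B (n + 2) x 0 0 = 1 := by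
    have hz : ((0 : Fin (n + 2)) : ℕ) = 0 := rfl
    simp only [B, Matrix.of_apply, hz]
    split_ifs <;> first | ring1 | (exfalso; first | assumption | omega)
  have hl0 : B (n + 2) x (Fin.last (n + 1)) 0 = -x := by
    have hz : ((0 : Fin (n + 2)) : ℕ) = 0 := rfl
    have hl : ((Fin.last (n + 1)) : ℕ) = n + 1 := rfl
    simp only [B, Matrix.of_apply, hz, hl]
    split_ifs <;> first | ring1 | (exfalso; first | assumption | omega)
  rw [h00, hl0, Fin.succAbove_zero, Fin.succAbove_last, sub0det, sub1,
    Matrix.det_smul, Matrix.det_transpose, Fin.val_zero, Fin.val_last, Fintype.card_fin]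
  have hsq : ((-1 : ℝ) ^ (n + 1)) * ((-1 : ℝ) ^ (n + 1)) = 1 := by
    rw [← pow_add]
    exact Even.neg_one_pow ⟨n + 1, by ring⟩
  linear_combination (-(x * (B (n + 1) (-x)).det)) * hsq

lemma sign_step (j : ℕ) :
    ((-1 : ℝ)) ^ (3 * (j + 1) / 2) = (-1 : ℝ) ^ (3 * j / 2) * (-1 : ℝ) ^ (j + 1) := by
  rcases Nat.even_or_odd j with ⟨a, ha⟩ | ⟨a, ha⟩
  · have h1 : 3 * (j + 1) / 2 = 3 * a + 1 := by omega
    have h2 : 3 * j / 2 = 3 * a := by omega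
    have h3 : Odd (j + 1) := ⟨a, by omega⟩
    rw [h1, h2, h3.neg_one_pow, pow_succ]
  · have h1 : 3 * (j + 1) / 2 = 3 * a + 3 := by omega
    have h2 : 3 * j / 2 = 3 * a + 1 := by omega
    have h3 : Even (j + 1) := ⟨a + 1, by omega⟩
    rw [h1, h2, h3.neg_one_pow, mul_one, show 3 * a + 3 = (3 * a + 1) + 2 from by ring,
      pow_add]
    norm_num

lemma choose_step (n j : ℕ) :
    ((n + 2 + (j + 1)) / 2).choose (j + 1)
      = ((n + (j + 1)) / 2).choose (j + 1) + ((n + 1 + j) / 2).choose j := by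
  have h1 : (n + 2 + (j + 1)) / 2 = (n + (j + 1)) / 2 + 1 := by omega
  have h2 : (n + 1 + j) / 2 = (n + (j + 1)) / 2 := by omega
  rw [h1, h2]
  have := Nat.choose_succ_succ ((n + (j + 1)) / 2) j
  simp only [Nat.succ_eq_add_one] at this
  omega

lemma P_ext (n : ℕ) (x : ℝ) :
    P n x = ∑ k ∈ Finset.range (n + 3),
      (-1 : ℝ) ^ (3 * k / 2) * (Nat.choose ((n + k) / 2) k : ℝ) * x ^ k := by
  refine Finset.sum_subset (Finset.range_subset_range.2 (by omega)) ?_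
  intro k hk hk'
  simp only [Finset.mem_range] at hk hk'
  have : (n + k) / 2 < k := by omega
  simp [Nat.choose_eq_zero_of_lt this]

lemma P_rec (n : ℕ) (x : ℝ) : P (n + 2) x = P n x - x * P (n + 1) (-x) := by
  have key : P (n + 2) x - P n x = -(x * P (n + 1) (-x)) := by
    rw [P_ext n x]
    show (∑ k ∈ Finset.range (n + 2 + 1), _) - _ = _
    rw [← Finset.sum_sub_distrib, Finset.sum_range_succ', P, Finset.mul_sum, ← Finset.sum_neg_distrib]
    have h0 : (-1 : ℝ) ^ (3 * 0 / 2) * (Nat.choose ((n + 2 + 0) / 2) 0 : ℝ) * x ^ 0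
        - (-1 : ℝ) ^ (3 * 0 / 2) * (Nat.choose ((n + 0) / 2) 0 : ℝ) * x ^ 0 = 0 := by
      simp
    rw [h0, add_zero]
    refine Finset.sum_congr rfl fun j _ => ?_
    rw [sign_step, choose_step]
    push_cast
    ring
  linarith [key]

lemma P_eq_detB : ∀ n : ℕ, ∀ x : ℝ, P n x = (B n x).det := by
  intro n
  induction n using Nat.strong_induction_on with
  | _ n ih =>
    match n with
    | 0 =>
      intro x
      rw [Matrix.det_isEmpty]
      simp [P]
    | 1 =>
      intro x
      rw [Matrix.det_fin_one]
      have : B 1 x 0 0 = 1 - x := by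
        have hz : ((0 : Fin 1) : ℕ) = 0 := rfl
        simp only [B, Matrix.of_apply, hz]
        norm_num
      rw [this]
      simp [P, Finset.sum_range_succ]
      ring
    | (m + 2) =>
      intro x
      rw [Bdet_rec, ← ih m (by omega), ← ih (m + 1) (by omega), P_rec]

/-- For each positive integer `n` and all real `x`: `P_n(x) = det(I_n − x·A_n)`. -/
theorem P_eq_det (n : ℕ) (hn : 0 < n) (x : ℝ) :
    P n x = ((1 : Matrix (Fin n) (Fin n) ℝ) - x • A n).det := by
  rw [P_eq_detB n x, detB_eq]
end

section
/- For each positive integer n, the n×n unit-primitive matrix A_n has exactly the n distinct eigenvalues (−1)^{n+1} / (2cos((2j−1)π/(2n+1))) for j = 1, …, n; equivalently det(xI_n − A_n) = Π_{j=1}^{n} (x − (−1)^{n+1}(2cos((2j−1)π/(2n+1)))^{−1}). -/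
open Matrix Real

/-!
For `cos ((2n+1)β) = 0` the vector `v_k = cos ((2k+1)β)` is an eigenvector of `A n`: row `i` of
`A n *ᵥ v` is `v_0 + ⋯ + v_{n-1-i}`, and `2 sin β` times this sum telescopes to
`sin (2(n-i)β) = sin ((2n+1)β) cos ((2i+1)β)`. Taking `β = π/2 - θ_j` with
`θ_j = (2j+1)π/(2n+1)` gives the eigenvalue `(-1)^(n+1) / (2 cos θ_j)`. The angles `θ_j` lie in
`(0, π)`, where `cos` is injective, so these are `n` distinct roots of the monic degree-`n`
characteristic polynomial, which therefore is their product.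
-/

open Polynomial Finset

theorem Matrix.isRoot_charpoly_of_mulVec_eq_smul {ι R : Type*} [Fintype ι] [DecidableEq ι]
    [CommRing R] [IsDomain R] {M : Matrix ι ι R} {v : ι → R} {μ : R} (hv : v ≠ 0)
    (hMv : M *ᵥ v = μ • v) : M.charpoly.IsRoot μ := by
  rw [IsRoot, eval_charpoly, ← exists_mulVec_eq_zero_iff]
  refine ⟨v, hv, ?_⟩
  rw [sub_mulVec, hMv, scalar_apply, ← smul_one_eq_diagonal, smul_mulVec, one_mulVec, sub_self]

theorem Matrix.charpoly_eq_prod_X_sub_C_of_injective {ι K : Type*} [Fintype ι] [DecidableEq ι]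
    [Field K] {M : Matrix ι ι K} {μ : ι → K} (hμ : Function.Injective μ)
    (hroot : ∀ i, M.charpoly.IsRoot (μ i)) : M.charpoly = ∏ i, (X - C (μ i)) :=
  eq_of_monic_of_dvd_of_natDegree_le (monic_prod_of_monic _ _ fun i _ ↦ monic_X_sub_C _)
    M.charpoly_monic
    (Finset.prod_dvd_of_coprime ((pairwise_coprime_X_sub_C hμ).set_pairwise _)
      fun i _ ↦ dvd_iff_isRoot.mpr (hroot i))
    (by rw [charpoly_natDegree_eq_dim, natDegree_finsetProd_X_sub_C_eq_card, card_univ])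

theorem two_mul_sin_mul_sum_cos_odd_mul (β : ℝ) (M : ℕ) :
    2 * sin β * ∑ k ∈ range M, cos ((2 * k + 1) * β) = sin (2 * M * β) := by
  induction M with
  | zero => simp
  | succ M ih =>
    rw [sum_range_succ, mul_add, ih, two_mul_sin_mul_cos]
    push_cast
    rw [show β - (2 * M + 1) * β = -(2 * M * β) by ring, sin_neg]
    ring_nf

theorem A_mulVec_apply {n : ℕ} (g : ℕ → ℝ) (i : Fin n) :
    (A n *ᵥ fun k ↦ g k) i = ∑ k ∈ range (n - i), g k := by
  have hrow : ∀ k ∈ range n, (if (i : ℕ) + k + 1 ≤ n then (1 : ℝ) else 0) * g k =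
      if k < n - i then g k else 0 := fun k _ ↦ by split_ifs <;> first | omega | simp
  simp only [mulVec, dotProduct, A, of_apply]
  rw [Fin.sum_univ_eq_sum_range
      (fun k ↦ (if (i : ℕ) + k + 1 ≤ n then (1 : ℝ) else 0) * g k), sum_congr rfl hrow,
    ← sum_filter]
  congr 1
  ext k
  simp only [mem_filter, mem_range]
  omega

noncomputable def cosOddVec (n : ℕ) (β : ℝ) : Fin n → ℝ :=
  fun k ↦ cos ((2 * (k : ℕ) + 1) * β)

theorem two_mul_sin_smul_A_mulVec_cosOddVec {n : ℕ} {β : ℝ} (h : cos ((2 * n + 1) * β) = 0) :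
    (2 * sin β) • (A n *ᵥ cosOddVec n β) = sin ((2 * n + 1) * β) • cosOddVec n β := by
  ext i
  have hcast : ((n - i : ℕ) : ℝ) = n - i := Nat.cast_sub i.isLt.le
  unfold cosOddVec
  rw [Pi.smul_apply, A_mulVec_apply fun m : ℕ ↦ cos ((2 * m + 1) * β), smul_eq_mul,
    two_mul_sin_mul_sum_cos_odd_mul, hcast,
    show 2 * (n - i : ℝ) * β = (2 * n + 1) * β - (2 * i + 1) * β by ring, sin_sub, h]
  simp

noncomputable def eigenAngle (n j : ℕ) : ℝ := (2 * j + 1) * π / (2 * n + 1)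

noncomputable def A_eigenvalue (n j : ℕ) : ℝ := (-1) ^ (n + 1) * (2 * cos (eigenAngle n j))⁻¹

theorem strictMono_eigenAngle (n : ℕ) : StrictMono (eigenAngle n) := fun j k hjk ↦ by
  unfold eigenAngle
  gcongr

theorem eigenAngle_mem_Ioo {n j : ℕ} (hj : j < n) : eigenAngle n j ∈ Set.Ioo 0 π := by
  refine ⟨by unfold eigenAngle; positivity, ?_⟩
  rw [eigenAngle, div_lt_iff₀ (by positivity)]
  have : (j : ℝ) < n := by exact_mod_cast hj
  nlinarith [pi_pos]

theorem cos_eigenAngle_ne_zero {n j : ℕ} (hj : j < n) : cos (eigenAngle n j) ≠ 0 := by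
  intro hcos
  have hmem := Set.Ioo_subset_Icc_self (eigenAngle_mem_Ioo hj)
  have hhalf : eigenAngle n j = π / 2 :=
    injOn_cos hmem ⟨by positivity, by linarith [pi_pos]⟩ (hcos.trans cos_pi_div_two.symm)
  rw [eigenAngle, div_eq_div_iff (by positivity) two_ne_zero] at hhalf
  have hreal : ((2 * j + 1) * 2 : ℝ) = 2 * n + 1 :=
    mul_right_cancel₀ pi_pos.ne' (by linear_combination hhalf)
  have : (2 * j + 1) * 2 = 2 * n + 1 := by exact_mod_cast hreal
  omega

theorem odd_mul_pi_div_two_sub_eigenAngle (n j : ℕ) :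
    (2 * n + 1) * (π / 2 - eigenAngle n j) = π / 2 + n * π - (2 * j + 1 : ℕ) * π := by
  rw [eigenAngle]
  field_simp
  push_cast
  ring

theorem cos_odd_mul_pi_div_two_sub_eigenAngle (n j : ℕ) :
    cos ((2 * n + 1) * (π / 2 - eigenAngle n j)) = 0 := by
  rw [odd_mul_pi_div_two_sub_eigenAngle, cos_sub_nat_mul_pi, cos_add_nat_mul_pi, cos_pi_div_two,
    mul_zero, mul_zero]

theorem sin_odd_mul_pi_div_two_sub_eigenAngle (n j : ℕ) :
    sin ((2 * n + 1) * (π / 2 - eigenAngle n j)) = (-1) ^ (n + 1) := by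
  rw [odd_mul_pi_div_two_sub_eigenAngle, sin_sub_nat_mul_pi, sin_add_nat_mul_pi, sin_pi_div_two,
    (odd_two_mul_add_one j).neg_one_pow]
  ring

theorem A_mulVec_cosOddVec_eigenAngle {n : ℕ} (j : Fin n) :
    A n *ᵥ cosOddVec n (π / 2 - eigenAngle n j) =
      A_eigenvalue n j • cosOddVec n (π / 2 - eigenAngle n j) := by
  have h := two_mul_sin_smul_A_mulVec_cosOddVec (cos_odd_mul_pi_div_two_sub_eigenAngle n j)
  rw [sin_pi_div_two_sub, sin_odd_mul_pi_div_two_sub_eigenAngle] at h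
  rw [A_eigenvalue, mul_comm, mul_smul, eq_inv_smul_iff₀ (mul_ne_zero two_ne_zero
    (cos_eigenAngle_ne_zero j.isLt)), h]

theorem isRoot_charpoly_A_eigenvalue {n : ℕ} (j : Fin n) :
    (A n).charpoly.IsRoot (A_eigenvalue n j) := by
  refine isRoot_charpoly_of_mulVec_eq_smul (fun h ↦ ?_) (A_mulVec_cosOddVec_eigenAngle j)
  have h0 := congrFun h ⟨0, j.pos⟩
  simp only [cosOddVec, Nat.cast_zero, mul_zero, zero_add, one_mul, cos_pi_div_two_sub,
    Pi.zero_apply] at h0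
  exact (sin_pos_of_mem_Ioo (eigenAngle_mem_Ioo j.isLt)).ne' h0

theorem A_eigenvalue_injective (n : ℕ) :
    Function.Injective fun j : Fin n ↦ A_eigenvalue n j := by
  intro j k h
  have hcos : cos (eigenAngle n j) = cos (eigenAngle n k) :=
    mul_left_cancel₀ two_ne_zero (inv_injective (mul_left_cancel₀ (by simp) h))
  have hangle := injOn_cos (Set.Ioo_subset_Icc_self (eigenAngle_mem_Ioo j.isLt))
    (Set.Ioo_subset_Icc_self (eigenAngle_mem_Ioo k.isLt)) hcos
  exact Fin.ext ((strictMono_eigenAngle n).injective hangle)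

theorem A_eigenvalues_general (n : ℕ) :
    Function.Injective
        (fun j : Fin n =>
          (-1 : ℝ) ^ (n + 1) * (2 * Real.cos ((2 * (j : ℕ) + 1) * Real.pi / (2 * n + 1)))⁻¹) ∧
      ∀ x : ℝ,
        (x • (1 : Matrix (Fin n) (Fin n) ℝ) - A n).det =
          ∏ j : Fin n,
            (x - (-1 : ℝ) ^ (n + 1) *
              (2 * Real.cos ((2 * (j : ℕ) + 1) * Real.pi / (2 * n + 1)))⁻¹) := by
  have hchar := charpoly_eq_prod_X_sub_C_of_injective (A_eigenvalue_injective n)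
    isRoot_charpoly_A_eigenvalue
  refine ⟨A_eigenvalue_injective n, fun x ↦ ?_⟩
  rw [smul_one_eq_diagonal, ← scalar_apply, ← eval_charpoly, hchar, eval_prod]
  simp [A_eigenvalue, eigenAngle]

/-- For each positive integer `n`, the `n` values `(−1)^{n+1}/(2cos((2j−1)π/(2n+1)))`,
`j = 1, …, n`, are distinct and
`det(x·I_n − A_n) = ∏_{j=1}^{n} (x − (−1)^{n+1}(2cos((2j−1)π/(2n+1)))⁻¹)`. -/
theorem A_eigenvalues (n : ℕ) (hn : 0 < n) :
    Function.Injective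
        (fun j : Fin n =>
          (-1 : ℝ) ^ (n + 1) * (2 * Real.cos ((2 * (j : ℕ) + 1) * Real.pi / (2 * n + 1)))⁻¹) ∧
      ∀ x : ℝ,
        (x • (1 : Matrix (Fin n) (Fin n) ℝ) - A n).det =
          ∏ j : Fin n,
            (x - (-1 : ℝ) ^ (n + 1) *
              (2 * Real.cos ((2 * (j : ℕ) + 1) * Real.pi / (2 * n + 1)))⁻¹) :=
  A_eigenvalues_general n
end
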